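/- For any complex r with Re(r) > 0, the logarithmic derivative identity holds: d/dα [ ∏_p (1 - p^{-(1+α+γ)} + p^{-(1+2γ)}) ] evaluated at α = γ = r equals ∑_p (log p)/p^{1+2r}, where the product and sum run over all primes and converge absolutely. -/

import Mathlib

/-!
At `α = r` every Euler factor equals `1`, so the product equals `1` there and its derivative
is its logarithmic derivative. The factors differ from `1` by at most
`p ^ (-(1 + 2 Re r)) + p ^ (-(1 + Re r))` on `Re α > 0`, so the product converges locally
uniformly there, and the logarithmic derivative of the product is the sum of those of the
factors, `log p / p ^ (1 + 2r)`; this series converges absolutely since it is a sub-series of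
the Dirichlet series of the von Mangoldt function.
-/

open Complex

lemma Nat.Primes.summable_norm_log_div_cpow {s : ℂ} (hs : 1 < s.re) :
    Summable fun p : Nat.Primes => ‖(Real.log (p : ℕ) : ℂ) / ((p : ℕ) : ℂ) ^ s‖ := by
  have hΛ := summable_norm_iff.mpr (ArithmeticFunction.LSeriesSummable_vonMangoldt hs)
  refine (hΛ.comp_injective Subtype.coe_injective).congr fun p => ?_
  simp [LSeries.term_of_ne_zero p.prop.ne_zero,
    ArithmeticFunction.vonMangoldt_apply_prime p.prop]

noncomputable def eulerFactor (r : ℂ) (p : Nat.Primes) (α : ℂ) : ℂ :=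
  1 - ((p : ℕ) : ℂ) ^ (-(1 + α + r)) + ((p : ℕ) : ℂ) ^ (-(1 + 2 * r))

namespace eulerFactor

variable (r : ℂ) (p : Nat.Primes)

lemma apply_self : eulerFactor r p r = 1 := by
  rw [eulerFactor, show -(1 + r + r) = -(1 + 2 * r) by ring, sub_add_cancel]

lemma hasDerivAt (α : ℂ) :
    HasDerivAt (eulerFactor r p)
      (((p : ℕ) : ℂ) ^ (-(1 + α + r)) * log ((p : ℕ) : ℂ)) α := by
  have hexp : HasDerivAt (fun β : ℂ => -(1 + β + r)) (-1) α := by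
    simpa using (((hasDerivAt_id α).const_add 1).add_const r).fun_neg
  have hpow := hexp.const_cpow (c := ((p : ℕ) : ℂ)) (.inl (mod_cast p.prop.ne_zero))
  exact (((hasDerivAt_const α 1).fun_sub hpow).add_const _).congr_deriv (by ring)

lemma differentiable : Differentiable ℂ (eulerFactor r p) :=
  fun α => (hasDerivAt r p α).differentiableAt

lemma logDeriv_apply_self :
    logDeriv (eulerFactor r p) r =
      (Real.log (p : ℕ) : ℂ) / ((p : ℕ) : ℂ) ^ (1 + 2 * r) := by
  rw [logDeriv_apply, (hasDerivAt r p r).deriv, apply_self, div_one,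
    show -(1 + r + r) = -(1 + 2 * r) by ring, cpow_neg, ← natCast_log, div_eq_inv_mul]

lemma norm_sub_one_le {α : ℂ} (hα : 0 ≤ α.re) :
    ‖eulerFactor r p α - 1‖ ≤
      ((p : ℕ) : ℝ) ^ (-(1 + 2 * r.re)) + ((p : ℕ) : ℝ) ^ (-(1 + r.re)) := by
  have hp : (1 : ℝ) ≤ (p : ℕ) := mod_cast p.prop.one_le
  calc ‖eulerFactor r p α - 1‖
      = ‖((p : ℕ) : ℂ) ^ (-(1 + 2 * r)) - ((p : ℕ) : ℂ) ^ (-(1 + α + r))‖ := by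
        congr 1; rw [eulerFactor]; ring
    _ ≤ ((p : ℕ) : ℝ) ^ (-(1 + 2 * r.re)) + ((p : ℕ) : ℝ) ^ (-(1 + α.re + r.re)) := by
        refine (norm_sub_le _ _).trans_eq ?_
        simp [norm_natCast_cpow_of_pos p.prop.pos]
    _ ≤ _ := add_le_add le_rfl (Real.rpow_le_rpow_of_exponent_le hp (by linarith))

end eulerFactor

lemma multipliableLocallyUniformlyOn_eulerFactor {r : ℂ} (hr : 0 < r.re) :
    MultipliableLocallyUniformlyOn (eulerFactor r) {α : ℂ | 0 < α.re} := by
  have hbound : Summable fun p : Nat.Primes =>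
      ((p : ℕ) : ℝ) ^ (-(1 + 2 * r.re)) + ((p : ℕ) : ℝ) ^ (-(1 + r.re)) :=
    (Nat.Primes.summable_rpow.mpr (by linarith)).add (Nat.Primes.summable_rpow.mpr (by linarith))
  have h := hbound.multipliableLocallyUniformlyOn_one_add (f := fun p α => eulerFactor r p α - 1)
    (isOpen_lt continuous_const continuous_re)
    (.of_forall fun p α hα => eulerFactor.norm_sub_one_le r p (le_of_lt hα))
    (fun p => ((eulerFactor.differentiable r p).continuous.sub continuous_const).continuousOn)
  simpa using h

theorem deriv_log_euler_product (r : ℂ) (hr : 0 < r.re) :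
    Summable (fun p : Nat.Primes =>
      ‖(Real.log ((p : ℕ) : ℝ) : ℂ) / ((p : ℕ) : ℂ) ^ ((1 : ℂ) + 2 * r)‖) ∧
    (∀ α : ℂ, 0 < α.re → Multipliable (fun p : Nat.Primes =>
      (1 : ℂ) - ((p : ℕ) : ℂ) ^ (-(1 + α + r)) + ((p : ℕ) : ℂ) ^ (-(1 + 2 * r)))) ∧
    deriv (fun α : ℂ => ∏' p : Nat.Primes,
        ((1 : ℂ) - ((p : ℕ) : ℂ) ^ (-(1 + α + r)) + ((p : ℕ) : ℂ) ^ (-(1 + 2 * r)))) r =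
      ∑' p : Nat.Primes,
        (Real.log ((p : ℕ) : ℝ) : ℂ) / ((p : ℕ) : ℂ) ^ ((1 : ℂ) + 2 * r) := by
  have hsum := Nat.Primes.summable_norm_log_div_cpow (s := 1 + 2 * r) (by simp; linarith)
  have hmul := multipliableLocallyUniformlyOn_eulerFactor hr
  refine ⟨hsum, fun α hα => hmul.multipliable hα, ?_⟩
  have hprod_self : ∏' p, eulerFactor r p r = 1 := by simp [eulerFactor.apply_self]
  have hlogDeriv := logDeriv_tprod_eq_tsum (isOpen_lt continuous_const continuous_re) hr
    (fun p => by rw [eulerFactor.apply_self]; exact one_ne_zero)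
    (fun p => (eulerFactor.differentiable r p).differentiableOn)
    (by simpa [eulerFactor.logDeriv_apply_self] using hsum.of_norm) hmul
    (by rw [hprod_self]; exact one_ne_zero)
  rw [logDeriv_apply, hprod_self, div_one] at hlogDeriv
  exact hlogDeriv.trans (tsum_congr fun p => eulerFactor.logDeriv_apply_self r p)
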